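/- Let A be a D-algebra and M a D-bimodule over A. Then the zeroth Dynkin cohomology vanishes: the Dynkin differential d_D^0 : CD^0(A;M) → CD^1(A;M) is injective, i.e. if m = {m_B} assigns to each connected B ⊆ D an element m_B ∈ M_B^B with m_B = Σ_{B' component of B\α} m_{B'} for every vertex α of B, then m = 0. -/

import Mathlib

open scoped Classical

section NestedSets

variable {V : Type*} [Fintype V] [DecidableEq V]

/-- The (induced subgraph on the) finite vertex set `B` is connected (in particular nonempty). -/
def Conn (G : SimpleGraph V) (B : Finset V) : Prop :=
  (G.induce (B : Set V)).Connected

/-- Two vertex sets are orthogonal: no edge of `G` joins a vertex of one to a vertex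
of the other. -/
def Orth (G : SimpleGraph V) (B C : Finset V) : Prop :=
  ∀ a ∈ B, ∀ b ∈ C, ¬ G.Adj a b

/-- Two subdiagrams are compatible if one contains the other or they are orthogonal. -/
def Compat (G : SimpleGraph V) (B C : Finset V) : Prop :=
  B ⊆ C ∨ C ⊆ B ∨ Orth G B C

/-- A nested set on the (connected) diagram `D` with vertex set `V`: a collection of
pairwise compatible connected subdiagrams containing `D` itself. -/
def Nested (G : SimpleGraph V) (H : Finset (Finset V)) : Prop :=
  Finset.univ ∈ H ∧ (∀ B ∈ H, Conn G B) ∧ ∀ B ∈ H, ∀ C ∈ H, Compat G B C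

/-- `iN H B` is the union of the elements of `H` strictly contained in `B`;
this coincides with the union of the *maximal* elements of `H` strictly contained in `B`. -/
noncomputable def iN (H : Finset (Finset V)) (B : Finset V) : Finset V :=
  (H.filter fun C => C ⊂ B).sup id

/-- `nN H B = n(B;H)` is the number of vertices of `B` not covered by the maximal
elements of `H` strictly contained in `B`. -/
noncomputable def nN (H : Finset (Finset V)) (B : Finset V) : ℕ :=
  (B \ iN H B).card

/-- `C` is a connected component of (the induced subgraph on) `S`. -/
def IsCC (G : SimpleGraph V) (S C : Finset V) : Prop :=
  C ⊆ S ∧ Conn G C ∧ ∀ C', C ⊆ C' → C' ⊆ S → Conn G C' → C' = C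

/-- A maximal nested set on `D`. -/
def MaxNested (G : SimpleGraph V) (F : Finset (Finset V)) : Prop :=
  Nested G F ∧ ∀ K, Nested G K → F ⊆ K → K = F

end NestedSets

section Dynkin

variable {V : Type*} [Fintype V] [DecidableEq V] {M : Type*} [AddCommGroup M]

/-- The set of connected components of (the induced subgraph on) `S`. -/
noncomputable def ccomps (Gr : SimpleGraph V) (S : Finset V) : Finset (Finset V) :=
  S.powerset.filter (IsCC Gr S)

/-- The Dynkin differential in degree 0:
`(d m)_{(B;α)} = m_B - ∑_{B' comp. of B∖α} m_{B'}`. -/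
noncomputable def dynD0 (Gr : SimpleGraph V) (m : Finset V → M) :
    Finset V → (Fin 1 → V) → M :=
  fun B α => m B - ∑ C ∈ ccomps Gr (B.erase (α 0)), m C

end Dynkin

/-! Strong induction on `B`: deleting any vertex `α` of a connected `B` leaves components that
are strictly smaller connected subdiagrams, on which `m` already vanishes, and the cocycle
condition at `(B; α)` expresses `m_B` as their sum. -/

section Components

variable {V : Type*} {G : SimpleGraph V} {S C : Finset V}

theorem subset_of_mem_ccomps (hC : C ∈ ccomps G S) : C ⊆ S :=
  (Finset.mem_filter.1 hC).2.1

theorem conn_of_mem_ccomps (hC : C ∈ ccomps G S) : Conn G C :=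
  (Finset.mem_filter.1 hC).2.2.1

end Components

theorem stmt14_general {V : Type*} [DecidableEq V]
    (Gr : SimpleGraph V)
    {M : Type*} [AddCommGroup M]
    (m : Finset V → M)
    (hker : ∀ (B : Finset V) (α : Fin 1 → V), Conn Gr B → α 0 ∈ B →
      dynD0 Gr m B α = 0) :
    ∀ B : Finset V, Conn Gr B → m B = 0 := by
  intro B
  induction B using Finset.strongInduction with
  | _ B ih =>
    intro hB
    obtain ⟨⟨α, hα⟩⟩ := hB.nonempty
    have hmB : m B = ∑ C ∈ ccomps Gr (B.erase α), m C :=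
      sub_eq_zero.1 (hker B (fun _ => α) hB hα)
    rw [hmB]
    refine Finset.sum_eq_zero fun C hC => ih C ?_ (conn_of_mem_ccomps hC)
    exact (subset_of_mem_ccomps hC).trans_ssubset (Finset.erase_ssubset hα)

/-- The zeroth Dynkin cohomology vanishes: the degree-zero Dynkin
differential is injective. If `m` assigns to each connected subdiagram `B` of `D` an
element `m_B ∈ M_B^B` with `d_D⁰ m = 0`, i.e. `m_B = ∑_{B' comp. of B∖α} m_{B'}` for
every vertex `α` of `B`, then `m = 0`. -/
theorem stmt14 {V : Type*} [Fintype V] [DecidableEq V]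
    (Gr : SimpleGraph V) (hGr : Gr.Connected)
    {M : Type*} [AddCommGroup M]
    (MB : Finset V → AddSubgroup M)
    (m : Finset V → M)
    (hmem : ∀ B : Finset V, Conn Gr B → m B ∈ MB B)
    (hker : ∀ (B : Finset V) (α : Fin 1 → V), Conn Gr B → α 0 ∈ B →
      dynD0 Gr m B α = 0) :
    ∀ B : Finset V, Conn Gr B → m B = 0 :=
  stmt14_general Gr m hker
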